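/- arXiv:1901.01983 — 3 statements merged into one kernel-verified Lean document; each statement's English description precedes it below -/
import Mathlib

section
/- For every measurable function u : ℝ^N → ℝ with [u]_{(s,M)} < ∞ one has ξ₀([u]_{(s,M)}) ≤ G(u) ≤ ξ₁([u]_{(s,M)}). -/
/-!
Condition (m₂) says `l * M τ ≤ τ * M' τ ≤ r * M τ` with `M' τ = m τ * τ`, i.e. `τ ↦ M τ / τ ^ l`
increases and `τ ↦ M τ / τ ^ r` decreases on `(0, ∞)`. Hence `ξ₀(λ) M(a/λ) ≤ M(a) ≤ ξ₁(λ) M(a/λ)`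
for every `λ > 0`, and integrating, `ξ₀(λ) Φ(λ) ≤ G(u) ≤ ξ₁(λ) Φ(λ)` with `Φ(λ) = ∬ M(h_u/λ)`.
Now `Φ ≤ 1` on `S` and `Φ > 1` on `(0, inf S)`; letting `λ → inf S` from either side gives the
two bounds, by continuity of `ξ₀` and `ξ₁`.
-/

open MeasureTheory Set Filter

section Power

variable {F : ℝ → ℝ} {p : ℝ}

theorem monotoneOn_div_rpow_of_le_mul_deriv {F' : ℝ → ℝ}
    (hF : ∀ τ, 0 < τ → HasDerivAt F (F' τ) τ) (hp : ∀ τ, 0 < τ → p * F τ ≤ τ * F' τ) :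
    MonotoneOn (fun τ => F τ / τ ^ p) (Ioi 0) := by
  have hderiv : ∀ τ, 0 < τ → HasDerivAt (fun τ => F τ / τ ^ p)
      ((F' τ * τ ^ p - F τ * (p * τ ^ (p - 1))) / (τ ^ p) ^ 2) τ := fun τ hτ =>
    (hF τ hτ).div (Real.hasDerivAt_rpow_const (Or.inl hτ.ne')) (Real.rpow_pos_of_pos hτ p).ne'
  refine monotoneOn_of_deriv_nonneg (convex_Ioi 0)
    (fun τ hτ => (hderiv τ hτ).continuousAt.continuousWithinAt)
    (fun τ hτ => (hderiv τ (interior_subset hτ)).differentiableAt.differentiableWithinAt)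
    fun τ hτ => ?_
  rw [interior_Ioi] at hτ
  have hτ : 0 < τ := hτ
  rw [(hderiv τ hτ).deriv]
  have hsplit : τ ^ p = τ * τ ^ (p - 1) := by
    conv_lhs => rw [← add_sub_cancel 1 p, Real.rpow_add hτ, Real.rpow_one]
  have hnum : F' τ * τ ^ p - F τ * (p * τ ^ (p - 1)) = (τ * F' τ - p * F τ) * τ ^ (p - 1) := by
    rw [hsplit]; ring
  rw [hnum]
  exact div_nonneg (mul_nonneg (sub_nonneg.2 (hp τ hτ)) (Real.rpow_nonneg hτ.le _)) (sq_nonneg _)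

theorem antitoneOn_div_rpow_of_mul_deriv_le {F' : ℝ → ℝ}
    (hF : ∀ τ, 0 < τ → HasDerivAt F (F' τ) τ) (hp : ∀ τ, 0 < τ → τ * F' τ ≤ p * F τ) :
    AntitoneOn (fun τ => F τ / τ ^ p) (Ioi 0) := by
  have hneg := monotoneOn_div_rpow_of_le_mul_deriv (F := fun τ => -F τ) (p := p)
    (fun τ hτ => (hF τ hτ).neg) fun τ hτ => by linarith [hp τ hτ]
  intro a ha b hb hab
  simpa only [neg_div, neg_le_neg_iff] using hneg ha hb hab

theorem div_rpow_le_div_rpow_mul_iff {σ t : ℝ} (hσ : 0 < σ) (ht : 0 < t) :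
    F t / t ^ p ≤ F (σ * t) / (σ * t) ^ p ↔ σ ^ p * F t ≤ F (σ * t) := by
  rw [Real.mul_rpow hσ.le ht.le, ← div_div,
    div_le_div_iff_of_pos_right (Real.rpow_pos_of_pos ht p), le_div_iff₀' (Real.rpow_pos_of_pos hσ p)]

theorem div_rpow_mul_le_div_rpow_iff {σ t : ℝ} (hσ : 0 < σ) (ht : 0 < t) :
    F (σ * t) / (σ * t) ^ p ≤ F t / t ^ p ↔ F (σ * t) ≤ σ ^ p * F t := by
  rw [Real.mul_rpow hσ.le ht.le, ← div_div,
    div_le_div_iff_of_pos_right (Real.rpow_pos_of_pos ht p), div_le_iff₀' (Real.rpow_pos_of_pos hσ p)]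

theorem min_rpow_mul_le_and_le_max_rpow_mul {l r : ℝ}
    (hl : MonotoneOn (fun τ => F τ / τ ^ l) (Ioi 0)) (hr : AntitoneOn (fun τ => F τ / τ ^ r) (Ioi 0))
    {σ t : ℝ} (hσ : 0 < σ) (ht : 0 < t) (hFt : 0 ≤ F t) :
    min (σ ^ l) (σ ^ r) * F t ≤ F (σ * t) ∧ F (σ * t) ≤ max (σ ^ l) (σ ^ r) * F t := by
  have hσt : σ * t ∈ Ioi 0 := mul_pos hσ ht
  rcases le_total 1 σ with h1 | h1
  · have hle : t ≤ σ * t := le_mul_of_one_le_left ht.le h1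
    have hlow := (div_rpow_le_div_rpow_mul_iff hσ ht).1 (hl ht hσt hle)
    have hup := (div_rpow_mul_le_div_rpow_iff hσ ht).1 (hr ht hσt hle)
    exact ⟨(mul_le_mul_of_nonneg_right (min_le_left _ _) hFt).trans hlow,
      hup.trans (mul_le_mul_of_nonneg_right (le_max_right _ _) hFt)⟩
  · have hle : σ * t ≤ t := mul_le_of_le_one_left ht.le h1
    have hlow := (div_rpow_le_div_rpow_mul_iff hσ ht).1 (hr hσt ht hle)
    have hup := (div_rpow_mul_le_div_rpow_iff hσ ht).1 (hl hσt ht hle)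
    exact ⟨(mul_le_mul_of_nonneg_right (min_le_right _ _) hFt).trans hlow,
      hup.trans (mul_le_mul_of_nonneg_right (le_max_left _ _) hFt)⟩

end Power

theorem hasDerivAt_intervalIntegral_abs {f : ℝ → ℝ} (hf : ContinuousOn f (Ioi 0)) {τ : ℝ}
    (hτ : 0 < τ) (hint : IntervalIntegrable f volume 0 τ) :
    HasDerivAt (fun t => ∫ s in (0 : ℝ)..|t|, f s) (f τ) τ := by
  have hderiv : HasDerivAt (fun t => ∫ s in (0 : ℝ)..t, f s) (f τ) τ :=
    intervalIntegral.integral_hasDerivAt_right hint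
      (hf.stronglyMeasurableAtFilter isOpen_Ioi τ hτ) (hf.continuousAt (Ioi_mem_nhds hτ))
  refine hderiv.congr_of_eventuallyEq ?_
  filter_upwards [Ioi_mem_nhds hτ] with t ht
  rw [abs_of_pos ht]

section NFunction

variable {m M : ℝ → ℝ} {l r : ℝ}

theorem min_rpow_mul_le_and_le_max_rpow_mul_of_ratio_bounds
    (hm_pos : ∀ t : ℝ, 0 < t → 0 < m t) (hm_cont : ContinuousOn m (Ioi 0))
    (hM : ∀ t : ℝ, M t = ∫ s in (0 : ℝ)..|t|, m s * s)
    (hM_int : ∀ t : ℝ, IntervalIntegrable (fun s => m s * s) volume 0 |t|)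
    (hm2 : ∀ t : ℝ, 0 < t → l ≤ m t * t ^ 2 / M t ∧ m t * t ^ 2 / M t ≤ r)
    {σ : ℝ} (hσ : 0 < σ) (a : ℝ) :
    min (σ ^ l) (σ ^ r) * M (a / σ) ≤ M a ∧ M a ≤ max (σ ^ l) (σ ^ r) * M (a / σ) := by
  have hM_abs : ∀ t, M |t| = M t := fun t => by rw [hM, hM, abs_abs]
  have hint : ∀ τ, 0 < τ → IntervalIntegrable (fun s => m s * s) volume 0 τ := fun τ hτ => by
    simpa only [abs_of_pos hτ] using hM_int τ
  have hM_pos : ∀ τ, 0 < τ → 0 < M τ := fun τ hτ => by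
    rw [hM, abs_of_pos hτ]
    exact intervalIntegral.intervalIntegral_pos_of_pos_on (hint τ hτ)
      (fun s hs => mul_pos (hm_pos s hs.1) hs.1) hτ
  have hM_deriv : ∀ τ, 0 < τ → HasDerivAt M (m τ * τ) τ := fun τ hτ => by
    rw [show M = _ from funext hM]
    exact hasDerivAt_intervalIntegral_abs (hm_cont.mul continuousOn_id) hτ (hint τ hτ)
  have hlow : ∀ τ, 0 < τ → l * M τ ≤ τ * (m τ * τ) := fun τ hτ => by
    have := (le_div_iff₀ (hM_pos τ hτ)).1 (hm2 τ hτ).1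
    linarith
  have hup : ∀ τ, 0 < τ → τ * (m τ * τ) ≤ r * M τ := fun τ hτ => by
    have := (div_le_iff₀ (hM_pos τ hτ)).1 (hm2 τ hτ).2
    linarith
  rcases eq_or_ne a 0 with rfl | ha
  · simp [hM]
  have ht : 0 < |a| / σ := div_pos (abs_pos.2 ha) hσ
  have hscale := min_rpow_mul_le_and_le_max_rpow_mul
    (monotoneOn_div_rpow_of_le_mul_deriv hM_deriv hlow)
    (antitoneOn_div_rpow_of_mul_deriv_le hM_deriv hup) hσ ht (hM_pos _ ht).le
  have habs : |a| / σ = |a / σ| := by rw [abs_div, abs_of_pos hσ]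
  rwa [mul_div_cancel₀ _ hσ.ne', hM_abs, habs, hM_abs] at hscale

end NFunction

section Luxemburg

variable {Φ : ℝ → ENNReal} {G : ENNReal} {f : ℝ → ℝ}

theorem ofReal_sInf_le_of_forall_ofReal_mul_le (hf : Continuous f) (hf0 : f 0 = 0)
    (hlow : ∀ lam, 0 < lam → ENNReal.ofReal (f lam) * Φ lam ≤ G) :
    ENNReal.ofReal (f (sInf {lam | 0 < lam ∧ Φ lam ≤ 1})) ≤ G := by
  set S := {lam | 0 < lam ∧ Φ lam ≤ 1}
  have hS0 : 0 ≤ sInf S := Real.sInf_nonneg fun _ h => h.1.le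
  have hbelow : ∀ lam ∈ Ioo 0 (sInf S), ENNReal.ofReal (f lam) ≤ G := fun lam hlam => by
    have hnot : lam ∉ S := notMem_of_lt_csInf hlam.2 ⟨0, fun _ h => h.1.le⟩
    have hΦ : 1 ≤ Φ lam := le_of_not_ge fun h => hnot ⟨hlam.1, h⟩
    calc ENNReal.ofReal (f lam) = ENNReal.ofReal (f lam) * 1 := (mul_one _).symm
      _ ≤ ENNReal.ofReal (f lam) * Φ lam := mul_le_mul_right hΦ _
      _ ≤ G := hlow lam hlam.1
  rcases hS0.eq_or_lt with h0 | hpos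
  · rw [← h0, hf0, ENNReal.ofReal_zero]
    exact zero_le
  · have hmem : sInf S ∈ closure (Ioo 0 (sInf S)) := by
      rw [closure_Ioo hpos.ne]
      exact right_mem_Icc.2 hS0
    exact closure_minimal hbelow
      (isClosed_le (ENNReal.continuous_ofReal.comp hf) continuous_const) hmem

theorem le_ofReal_sInf_of_forall_le_ofReal_mul (hf : Continuous f)
    (hne : {lam | 0 < lam ∧ Φ lam ≤ 1}.Nonempty)
    (hup : ∀ lam, 0 < lam → G ≤ ENNReal.ofReal (f lam) * Φ lam) :
    G ≤ ENNReal.ofReal (f (sInf {lam | 0 < lam ∧ Φ lam ≤ 1})) := by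
  obtain ⟨u, -, hu, huS⟩ := exists_seq_tendsto_sInf hne ⟨0, fun _ h => h.1.le⟩
  refine ge_of_tendsto (((ENNReal.continuous_ofReal.comp hf).tendsto _).comp hu)
    (Eventually.of_forall fun n => ?_)
  calc G ≤ ENNReal.ofReal (f (u n)) * Φ (u n) := hup _ (huS n).1
    _ ≤ ENNReal.ofReal (f (u n)) * 1 := mul_le_mul_right (huS n).2 _
    _ = ENNReal.ofReal (f (u n)) := mul_one _

end Luxemburg

theorem ofReal_mul_lintegral_lintegral {α β : Type*} [MeasurableSpace α] [MeasurableSpace β]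
    {μ : Measure α} {ν : Measure β} {c : ℝ} (hc : 0 ≤ c) (g : α → β → ℝ) :
    ENNReal.ofReal c * ∫⁻ x, ∫⁻ y, ENNReal.ofReal (g x y) ∂ν ∂μ =
      ∫⁻ x, ∫⁻ y, ENNReal.ofReal (c * g x y) ∂ν ∂μ := by
  simp_rw [ENNReal.ofReal_mul hc, lintegral_const_mul' _ _ ENNReal.ofReal_ne_top]

theorem stmt_2_general (l r : ℝ) (hl : 1 < l) (hlr : l ≤ r)
    (m : ℝ → ℝ) (hm_pos : ∀ t : ℝ, 0 < t → 0 < m t)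
    (hm_cont : ContinuousOn m (Set.Ioi (0 : ℝ)))
    (M : ℝ → ℝ) (hM : ∀ t : ℝ, M t = ∫ s in (0 : ℝ)..|t|, m s * s)
    (hM_int : ∀ t : ℝ, IntervalIntegrable (fun s => m s * s) volume 0 |t|)
    (hm2 : ∀ t : ℝ, 0 < t → l ≤ m t * t ^ 2 / M t ∧ m t * t ^ 2 / M t ≤ r)
    (N : ℕ) (s : ℝ)
    (h : EuclideanSpace ℝ (Fin N) → EuclideanSpace ℝ (Fin N) → ℝ)
    (G : ENNReal) (hG : G = ∫⁻ x, ∫⁻ y, ENNReal.ofReal (M (h x y)))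
    (S : Set ℝ)
    (hS : S = {lam : ℝ | 0 < lam ∧
      ∫⁻ x, ∫⁻ y, ENNReal.ofReal (M (h x y / lam)) ≤ 1})
    (hS_ne : S.Nonempty) :
    ENNReal.ofReal (min (sInf S ^ l) (sInf S ^ r)) ≤ G ∧
      G ≤ ENNReal.ofReal (max (sInf S ^ l) (sInf S ^ r)) := by
  subst hG hS
  have hl0 : 0 < l := one_pos.trans hl
  have hr0 : 0 < r := hl0.trans_le hlr
  have hscale := fun σ (hσ : 0 < σ) =>
    min_rpow_mul_le_and_le_max_rpow_mul_of_ratio_bounds hm_pos hm_cont hM hM_int hm2 hσ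
  have hcont_l := Real.continuous_rpow_const hl0.le
  have hcont_r := Real.continuous_rpow_const hr0.le
  constructor
  · refine ofReal_sInf_le_of_forall_ofReal_mul_le (hcont_l.min hcont_r)
      (by simp [Real.zero_rpow hl0.ne', Real.zero_rpow hr0.ne']) fun σ hσ => ?_
    rw [ofReal_mul_lintegral_lintegral (by positivity)]
    exact lintegral_mono fun x => lintegral_mono fun y =>
      ENNReal.ofReal_le_ofReal (hscale σ hσ (h x y)).1
  · refine le_ofReal_sInf_of_forall_le_ofReal_mul (hcont_l.max hcont_r) hS_ne fun σ hσ => ?_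
    rw [ofReal_mul_lintegral_lintegral (by positivity)]
    exact lintegral_mono fun x => lintegral_mono fun y =>
      ENNReal.ofReal_le_ofReal (hscale σ hσ (h x y)).2

/-- For the N-function `M` built from `m` satisfying (m₁)–(m₂) with
`1 < l ≤ r`, inverse `Minv` of `M|_{[0,∞)}`, `s ∈ (0,1)`, and the quotient
`h_u(x,y) = (u(x)−u(y))/(|x−y|^s · Minv(|x−y|^N))` for `x ≠ y`: every measurable
`u : ℝ^N → ℝ` with finite Gagliardo seminorm `[u]_{(s,M)} = inf S`, where
`S = {λ > 0 : ∬ M(h_u/λ) ≤ 1}`, satisfies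
`ξ₀([u]_{(s,M)}) ≤ G(u) ≤ ξ₁([u]_{(s,M)})`, where `G(u) = ∬ M(h_u(x,y)) dx dy`. -/
theorem stmt_2 (l r : ℝ) (hl : 1 < l) (hlr : l ≤ r)
    (m : ℝ → ℝ) (hm_pos : ∀ t : ℝ, 0 < t → 0 < m t)
    (hm_cont : ContinuousOn m (Set.Ioi (0 : ℝ)))
    (hm_mono : StrictMonoOn (fun t => m t * t) (Set.Ioi (0 : ℝ)))
    (M : ℝ → ℝ) (hM : ∀ t : ℝ, M t = ∫ s in (0 : ℝ)..|t|, m s * s)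
    (hM_int : ∀ t : ℝ, IntervalIntegrable (fun s => m s * s) volume 0 |t|)
    (hm2 : ∀ t : ℝ, 0 < t → l ≤ m t * t ^ 2 / M t ∧ m t * t ^ 2 / M t ≤ r)
    (N : ℕ) (hN : 1 ≤ N) (s : ℝ) (hs0 : 0 < s) (hs1 : s < 1)
    (Minv : ℝ → ℝ)
    (hMinv : ∀ t : ℝ, 0 ≤ t → 0 ≤ Minv t ∧ M (Minv t) = t ∧ Minv (M t) = t)
    (u : EuclideanSpace ℝ (Fin N) → ℝ) (hu_meas : Measurable u)
    (h : EuclideanSpace ℝ (Fin N) → EuclideanSpace ℝ (Fin N) → ℝ)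
    (hh : ∀ x y, x ≠ y →
      h x y = (u x - u y) / (‖x - y‖ ^ s * Minv (‖x - y‖ ^ N)))
    (G : ENNReal) (hG : G = ∫⁻ x, ∫⁻ y, ENNReal.ofReal (M (h x y)))
    (S : Set ℝ)
    (hS : S = {lam : ℝ | 0 < lam ∧
      ∫⁻ x, ∫⁻ y, ENNReal.ofReal (M (h x y / lam)) ≤ 1})
    (hS_ne : S.Nonempty) :
    ENNReal.ofReal (min (sInf S ^ l) (sInf S ^ r)) ≤ G ∧
      G ≤ ENNReal.ofReal (max (sInf S ^ l) (sInf S ^ r)) :=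
  stmt_2_general l r hl hlr m hm_pos hm_cont M hM hM_int hm2 N s h G hG S hS hS_ne
end

section
/- Let M : ℝ → ℝ be an even function with M(0) = 0 such that the map t ↦ M(√t) is convex on [0,∞). Then for all real numbers a and b one has M((a+b)/2) + M((a−b)/2) ≤ (M(a) + M(b))/2. -/
/-!
Write `M x = f (x ^ 2)` with `f t = M (√t)`, which is possible because `M` is even. A convex `f`
on `[0, ∞)` with `f 0 ≤ 0` is superadditive, and `((a + b) / 2) ^ 2 + ((a - b) / 2) ^ 2` is the
midpoint of `a ^ 2` and `b ^ 2`; so superadditivity followed by midpoint convexity of `f` gives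
the inequality.
-/

open Set

namespace ConvexOn

variable {f : ℝ → ℝ}

theorem map_mul_le_mul (hf : ConvexOn ℝ (Ici 0) f) (hf0 : f 0 ≤ 0) {t x : ℝ} (ht₀ : 0 ≤ t)
    (ht₁ : t ≤ 1) (hx : 0 ≤ x) : f (t * x) ≤ t * f x := by
  have h := hf.2 self_mem_Ici hx (sub_nonneg.2 ht₁) ht₀ (sub_add_cancel 1 t)
  simp only [smul_eq_mul, mul_zero, zero_add] at h
  nlinarith

theorem add_le_map_add (hf : ConvexOn ℝ (Ici 0) f) (hf0 : f 0 ≤ 0) {u v : ℝ} (hu : 0 ≤ u)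
    (hv : 0 ≤ v) : f u + f v ≤ f (u + v) := by
  rcases (add_nonneg hu hv).eq_or_lt with h | hpos
  · obtain ⟨rfl, rfl⟩ : u = 0 ∧ v = 0 := ⟨by linarith, by linarith⟩
    simp only [add_zero]
    linarith
  · have hu' := hf.map_mul_le_mul hf0 (div_nonneg hu hpos.le)
      ((div_le_one hpos).2 (le_add_of_nonneg_right hv)) hpos.le
    have hv' := hf.map_mul_le_mul hf0 (div_nonneg hv hpos.le)
      ((div_le_one hpos).2 (le_add_of_nonneg_left hu)) hpos.le
    rw [div_mul_cancel₀ _ hpos.ne'] at hu' hv'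
    calc f u + f v ≤ u / (u + v) * f (u + v) + v / (u + v) * f (u + v) := add_le_add hu' hv'
      _ = f (u + v) := by field_simp

theorem map_add_div_two_le (hf : ConvexOn ℝ (Ici 0) f) {x y : ℝ} (hx : 0 ≤ x) (hy : 0 ≤ y) :
    f ((x + y) / 2) ≤ (f x + f y) / 2 := by
  have h := hf.2 (mem_Ici.2 hx) (mem_Ici.2 hy) (by norm_num : (0 : ℝ) ≤ 1 / 2)
    (by norm_num : (0 : ℝ) ≤ 1 / 2) (by norm_num)
  simp only [smul_eq_mul] at h
  calc f ((x + y) / 2) = f (1 / 2 * x + 1 / 2 * y) := by ring_nf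
    _ ≤ 1 / 2 * f x + 1 / 2 * f y := h
    _ = (f x + f y) / 2 := by ring

end ConvexOn

theorem map_sqrt_sq_of_even {M : ℝ → ℝ} (hM : ∀ t, M (-t) = M t) (x : ℝ) :
    M √(x ^ 2) = M x := by
  rw [Real.sqrt_sq_eq_abs]
  rcases abs_choice x with h | h <;> rw [h]
  exact hM x

/-- If `M : ℝ → ℝ` is even, `M(0) = 0`, and `t ↦ M(√t)` is convex on
`[0,∞)`, then for all reals `a, b`:
`M((a+b)/2) + M((a−b)/2) ≤ (M(a) + M(b))/2`. -/
theorem stmt_9 (M : ℝ → ℝ) (hM_even : ∀ t : ℝ, M (-t) = M t) (hM0 : M 0 = 0)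
    (hconv : ConvexOn ℝ (Set.Ici (0 : ℝ)) (fun t => M (Real.sqrt t)))
    (a b : ℝ) :
    M ((a + b) / 2) + M ((a - b) / 2) ≤ (M a + M b) / 2 := by
  set f : ℝ → ℝ := fun t => M √t
  have hM_sq (x : ℝ) : M x = f (x ^ 2) := (map_sqrt_sq_of_even hM_even x).symm
  have hf0 : f 0 ≤ 0 := by simp [f, hM0]
  calc M ((a + b) / 2) + M ((a - b) / 2) = f (((a + b) / 2) ^ 2) + f (((a - b) / 2) ^ 2) := by
        rw [← hM_sq, ← hM_sq]
    _ ≤ f (((a + b) / 2) ^ 2 + ((a - b) / 2) ^ 2) :=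
        hconv.add_le_map_add hf0 (sq_nonneg _) (sq_nonneg _)
    _ = f ((a ^ 2 + b ^ 2) / 2) := by ring_nf
    _ ≤ (f (a ^ 2) + f (b ^ 2)) / 2 := hconv.map_add_div_two_le (sq_nonneg a) (sq_nonneg b)
    _ = (M a + M b) / 2 := by rw [← hM_sq, ← hM_sq]
end

section
/- Let M : ℝ → [0,∞) be an even function with M(0) = 0 such that the map t ↦ M(√t) is convex on [0,∞). Let V : ℝ^N → [0,∞) be measurable and let u, v : ℝ^N → ℝ be measurable. Then ∫_{ℝ^N} V(x)·M((u(x)+v(x))/2) dx + ∫_{ℝ^N} V(x)·M((u(x)−v(x))/2) dx ≤ (1/2)·∫_{ℝ^N} V(x)·M(u(x)) dx + (1/2)·∫_{ℝ^N} V(x)·M(v(x)) dx, where all integrals are Lebesgue integrals of nonnegative functions taken in [0,∞]. -/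
/-!
Write `M s = G (s ^ 2)` with `G t = M √t`. A convex `G` with `G 0 = 0` is superadditive on
`[0, ∞)`, and `((a + b) / 2) ^ 2 + ((a - b) / 2) ^ 2 = (a ^ 2 + b ^ 2) / 2`, so
`M ((a + b) / 2) + M ((a - b) / 2) ≤ G ((a ^ 2 + b ^ 2) / 2) ≤ (M a + M b) / 2` by convexity
once more. Multiplying by `V ≥ 0` and integrating gives the claim.
-/

open MeasureTheory Set

lemma ConvexOn.map_mul_le_mul_map {f : ℝ → ℝ} (hf : ConvexOn ℝ (Ici 0) f) (h0 : f 0 ≤ 0)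
    {s t : ℝ} (hs : 0 ≤ s) (ht₀ : 0 ≤ t) (ht₁ : t ≤ 1) : f (t * s) ≤ t * f s := by
  have := hf.2 (mem_Ici.2 hs) self_mem_Ici ht₀ (sub_nonneg.2 ht₁) (add_sub_cancel t 1)
  simp only [smul_eq_mul, mul_zero, add_zero] at this
  nlinarith

lemma ConvexOn.map_add_le {f : ℝ → ℝ} (hf : ConvexOn ℝ (Ici 0) f) (h0 : f 0 ≤ 0)
    {x y : ℝ} (hx : 0 ≤ x) (hy : 0 ≤ y) : f x + f y ≤ f (x + y) := by
  rcases (add_nonneg hx hy).eq_or_lt with hxy | hxy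
  · obtain ⟨rfl, rfl⟩ : x = 0 ∧ y = 0 := ⟨by linarith, by linarith⟩
    simpa using h0
  have hx' := hf.map_mul_le_mul_map h0 hxy.le (div_nonneg hx hxy.le)
    (div_le_one_of_le₀ (le_add_of_nonneg_right hy) hxy.le)
  have hy' := hf.map_mul_le_mul_map h0 hxy.le (div_nonneg hy hxy.le)
    (div_le_one_of_le₀ (le_add_of_nonneg_left hx) hxy.le)
  rw [div_mul_cancel₀ _ hxy.ne'] at hx' hy'
  calc f x + f y ≤ (x / (x + y) + y / (x + y)) * f (x + y) := by linarith
    _ = f (x + y) := by rw [← add_div, div_self hxy.ne', one_mul]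

lemma map_eq_map_sqrt_sq {M : ℝ → ℝ} (hM_even : ∀ t, M (-t) = M t) (s : ℝ) :
    M s = M √(s ^ 2) := by
  rw [Real.sqrt_sq_eq_abs]
  rcases abs_choice s with h | h <;> simp [h, hM_even]

theorem map_add_half_add_map_sub_half_le {M : ℝ → ℝ} (hM_even : ∀ t, M (-t) = M t)
    (hM0 : M 0 = 0) (hconv : ConvexOn ℝ (Ici 0) (fun t => M √t)) (a b : ℝ) :
    M ((a + b) / 2) + M ((a - b) / 2) ≤ M a / 2 + M b / 2 := by
  have h0 : M √0 ≤ 0 := by simp [hM0]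
  simp only [map_eq_map_sqrt_sq hM_even ((a + b) / 2), map_eq_map_sqrt_sq hM_even ((a - b) / 2),
    map_eq_map_sqrt_sq hM_even a, map_eq_map_sqrt_sq hM_even b]
  have hmid := hconv.2 (mem_Ici.2 (sq_nonneg a)) (mem_Ici.2 (sq_nonneg b))
    (by norm_num : (0 : ℝ) ≤ 1 / 2) (by norm_num : (0 : ℝ) ≤ 1 / 2) (by norm_num)
  simp only [smul_eq_mul] at hmid
  calc M √(((a + b) / 2) ^ 2) + M √(((a - b) / 2) ^ 2)
      ≤ M √(((a + b) / 2) ^ 2 + ((a - b) / 2) ^ 2) :=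
        hconv.map_add_le h0 (sq_nonneg _) (sq_nonneg _)
    _ = M √(1 / 2 * a ^ 2 + 1 / 2 * b ^ 2) := by ring_nf
    _ ≤ M √(a ^ 2) / 2 + M √(b ^ 2) / 2 := by linarith

lemma measurable_of_convexOn_comp_sqrt {M : ℝ → ℝ} (hM_even : ∀ t, M (-t) = M t)
    (hconv : ConvexOn ℝ (Ici 0) (fun t => M √t)) : Measurable M := by
  refine measurable_of_continuousOn_compl_singleton 0 ?_
  have hcont : ContinuousOn (fun t => M √t) (Ioi 0) :=
    (hconv.subset Ioi_subset_Ici_self (convex_Ioi 0)).continuousOn isOpen_Ioi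
  refine (hcont.comp (continuous_pow 2).continuousOn fun s hs => ?_).congr
    fun s _ => map_eq_map_sqrt_sq hM_even s
  exact mem_Ioi.2 (sq_pos_of_ne_zero hs)

lemma ENNReal.ofReal_add_ofReal_le_half_mul_add {a b c d : ℝ} (ha : 0 ≤ a) (hb : 0 ≤ b)
    (h : a + b ≤ c / 2 + d / 2) :
    ENNReal.ofReal a + ENNReal.ofReal b ≤
      1 / 2 * ENNReal.ofReal c + 1 / 2 * ENNReal.ofReal d := by
  rw [← ENNReal.ofReal_add ha hb]
  calc ENNReal.ofReal (a + b) ≤ ENNReal.ofReal (c / 2 + d / 2) := ENNReal.ofReal_le_ofReal h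
    _ ≤ ENNReal.ofReal (c / 2) + ENNReal.ofReal (d / 2) := ENNReal.ofReal_add_le
    _ = 1 / 2 * ENNReal.ofReal c + 1 / 2 * ENNReal.ofReal d := by
      rw [ENNReal.ofReal_div_of_pos two_pos, ENNReal.ofReal_div_of_pos two_pos,
        ENNReal.ofReal_ofNat, ENNReal.div_eq_inv_mul, ENNReal.div_eq_inv_mul, one_div]

theorem stmt_10_general (N : ℕ)
    (M : ℝ → ℝ) (hM_nonneg : ∀ t : ℝ, 0 ≤ M t)
    (hM_even : ∀ t : ℝ, M (-t) = M t) (hM0 : M 0 = 0)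
    (hconv : ConvexOn ℝ (Set.Ici (0 : ℝ)) (fun t => M (Real.sqrt t)))
    (V : EuclideanSpace ℝ (Fin N) → ℝ) (hV_meas : Measurable V)
    (hV_nonneg : ∀ x, 0 ≤ V x)
    (u v : EuclideanSpace ℝ (Fin N) → ℝ) (hu : Measurable u) :
    (∫⁻ x, ENNReal.ofReal (V x * M ((u x + v x) / 2))) +
        (∫⁻ x, ENNReal.ofReal (V x * M ((u x - v x) / 2))) ≤
      (1 / 2) * (∫⁻ x, ENNReal.ofReal (V x * M (u x))) +
        (1 / 2) * (∫⁻ x, ENNReal.ofReal (V x * M (v x))) := by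
  have hpoint (x : EuclideanSpace ℝ (Fin N)) :
      ENNReal.ofReal (V x * M ((u x + v x) / 2)) + ENNReal.ofReal (V x * M ((u x - v x) / 2)) ≤
        1 / 2 * ENNReal.ofReal (V x * M (u x)) + 1 / 2 * ENNReal.ofReal (V x * M (v x)) := by
    refine ENNReal.ofReal_add_ofReal_le_half_mul_add (mul_nonneg (hV_nonneg x) (hM_nonneg _))
      (mul_nonneg (hV_nonneg x) (hM_nonneg _)) ?_
    have := mul_le_mul_of_nonneg_left
      (map_add_half_add_map_sub_half_le hM_even hM0 hconv (u x) (v x)) (hV_nonneg x)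
    linarith
  have hmeas : Measurable fun x => ENNReal.ofReal (V x * M (u x)) :=
    (hV_meas.mul ((measurable_of_convexOn_comp_sqrt hM_even hconv).comp hu)).ennreal_ofReal
  calc _ ≤ ∫⁻ x, (ENNReal.ofReal (V x * M ((u x + v x) / 2)) +
          ENNReal.ofReal (V x * M ((u x - v x) / 2))) := le_lintegral_add _ _
    _ ≤ ∫⁻ x, (1 / 2 * ENNReal.ofReal (V x * M (u x)) +
          1 / 2 * ENNReal.ofReal (V x * M (v x))) := lintegral_mono hpoint
    _ = _ := by
      rw [lintegral_add_left (hmeas.const_mul _), lintegral_const_mul _ hmeas,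
        lintegral_const_mul' _ _ (by norm_num)]

/-- If `M : ℝ → [0,∞)` is even, `M(0) = 0`, `t ↦ M(√t)` is convex on
`[0,∞)`, `V : ℝ^N → [0,∞)` is measurable and `u, v : ℝ^N → ℝ` are measurable, then
`∫ V·M((u+v)/2) + ∫ V·M((u−v)/2) ≤ (1/2)∫ V·M(u) + (1/2)∫ V·M(v)`,
all integrals being Lebesgue integrals in `[0,∞]`. -/
theorem stmt_10 (N : ℕ) (hN : 1 ≤ N)
    (M : ℝ → ℝ) (hM_nonneg : ∀ t : ℝ, 0 ≤ M t)
    (hM_even : ∀ t : ℝ, M (-t) = M t) (hM0 : M 0 = 0)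
    (hconv : ConvexOn ℝ (Set.Ici (0 : ℝ)) (fun t => M (Real.sqrt t)))
    (V : EuclideanSpace ℝ (Fin N) → ℝ) (hV_meas : Measurable V)
    (hV_nonneg : ∀ x, 0 ≤ V x)
    (u v : EuclideanSpace ℝ (Fin N) → ℝ) (hu : Measurable u) (hv : Measurable v) :
    (∫⁻ x, ENNReal.ofReal (V x * M ((u x + v x) / 2))) +
        (∫⁻ x, ENNReal.ofReal (V x * M ((u x - v x) / 2))) ≤
      (1 / 2) * (∫⁻ x, ENNReal.ofReal (V x * M (u x))) +
        (1 / 2) * (∫⁻ x, ENNReal.ofReal (V x * M (v x))) :=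
  stmt_10_general N M hM_nonneg hM_even hM0 hconv V hV_meas hV_nonneg u v hu
end
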